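/- arXiv:2102.11478 — 3 statements merged into one kernel-verified Lean document; each statement's English description precedes it below -/
import Mathlib

section
/- Suppose α ≥ 2 and 0 < ε < 1/5. Then every continuous path σ : [0,1] → ℝ² of bounded variation with σ(0) = X_init = (1−ε, 1+2ε) and σ(1) = X_goal = (α+1+ε, 1+2ε) whose image intersects the region B₁ = [0,1] × [α+1, α+2] satisfies TV(σ) ≥ 2α − 2ε. -/
/-- A point of the plane `ℝ²` (as a Euclidean space) with given coordinates. -/
noncomputable def pt (x y : ℝ) : EuclideanSpace ℝ (Fin 2) := WithLp.toLp 2 ![x, y]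

/-- Total variation of a path over `[0,1]`: the supremum over all partitions
`0 = b₀ < ⋯ < bₙ = 1` of `Σ ‖σ(bᵢ) − σ(bᵢ₋₁)‖`. -/
noncomputable def TV (σ : ℝ → EuclideanSpace ℝ (Fin 2)) : ℝ :=
  (eVariationOn σ (Set.Icc 0 1)).toReal

/-! The path must climb from height `1 + 2ε` to height at least `α + 1` to reach `B₁`, and then
move right from abscissa at most `1` to abscissa `α + 1 + ε`; the total variation dominates
the length of the two chords through the visit to `B₁`, and each chord dominates the change of
one coordinate. -/

open Set

theorem BoundedVariationOn.dist_add_dist_le_toReal {α E : Type*} [LinearOrder α]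
    [PseudoMetricSpace E] {f : α → E} {a b c : α} (hf : BoundedVariationOn f (Icc a c))
    (hb : b ∈ Icc a c) :
    dist (f a) (f b) + dist (f b) (f c) ≤ (eVariationOn f (Icc a c)).toReal := by
  have hle : edist (f a) (f b) + edist (f b) (f c) ≤ eVariationOn f (Icc a c) :=
    calc edist (f a) (f b) + edist (f b) (f c)
        ≤ eVariationOn f (Icc a b) + eVariationOn f (Icc b c) :=
          add_le_add (eVariationOn.edist_le f (left_mem_Icc.2 hb.1) (right_mem_Icc.2 hb.1))
            (eVariationOn.edist_le f (left_mem_Icc.2 hb.2) (right_mem_Icc.2 hb.2))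
      _ ≤ eVariationOn f (Icc a b ∪ Icc b c) :=
          eVariationOn.add_le_union f fun _ hx _ hy => hx.2.trans hy.1
      _ = eVariationOn f (Icc a c) := by rw [Icc_union_Icc_eq_Icc hb.1 hb.2]
  simpa only [dist_edist, ENNReal.toReal_add (edist_ne_top _ _) (edist_ne_top _ _)] using
    ENNReal.toReal_mono hf hle

theorem EuclideanSpace.sub_apply_le_dist {ι : Type*} [Fintype ι] (x y : EuclideanSpace ℝ ι)
    (i : ι) : x i - y i ≤ dist x y :=
  (le_abs_self _).trans <| by simpa only [Real.dist_eq] using PiLp.dist_apply_le x y i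

theorem promenade_through_B1_long_general (α ε : ℝ) (hε0 : 0 < ε)
    (σ : ℝ → EuclideanSpace ℝ (Fin 2))
    (hbv : BoundedVariationOn σ (Set.Icc 0 1))
    (hinit : σ 0 = pt (1 - ε) (1 + 2*ε))
    (hgoal : σ 1 = pt (α + 1 + ε) (1 + 2*ε))
    (hB : ∃ s ∈ Set.Icc (0:ℝ) 1,
      σ s 0 ∈ Set.Icc (0:ℝ) 1 ∧ σ s 1 ∈ Set.Icc (α+1) (α+2)) :
    2*α - 2*ε ≤ TV σ := by
  obtain ⟨s, hs, ⟨-, hx⟩, ⟨hy, -⟩⟩ := hB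
  have hclimb : σ s 1 - (1 + 2*ε) ≤ dist (σ s) (σ 0) := by
    simpa [hinit, pt] using EuclideanSpace.sub_apply_le_dist (σ s) (σ 0) 1
  have hmove : α + 1 + ε - σ s 0 ≤ dist (σ 1) (σ s) := by
    simpa [hgoal, pt] using EuclideanSpace.sub_apply_le_dist (σ 1) (σ s) 0
  have hchords := hbv.dist_add_dist_le_toReal hs
  rw [dist_comm] at hclimb hmove
  unfold TV
  linarith

/-- In the promenade problem (with `α ≥ 2`, `0 < ε < 1/5`), any continuous path of
bounded variation from `X_init = (1−ε, 1+2ε)` to `X_goal = (α+1+ε, 1+2ε)` whose image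
meets `B₁ = [0,1] × [α+1, α+2]` has total variation at least `2α − 2ε`. -/
theorem promenade_through_B1_long (α ε : ℝ) (hα : 2 ≤ α) (hε0 : 0 < ε) (hε1 : ε < 1/5)
    (σ : ℝ → EuclideanSpace ℝ (Fin 2))
    (hcont : ContinuousOn σ (Set.Icc 0 1))
    (hbv : BoundedVariationOn σ (Set.Icc 0 1))
    (hinit : σ 0 = pt (1 - ε) (1 + 2*ε))
    (hgoal : σ 1 = pt (α + 1 + ε) (1 + 2*ε))
    (hB : ∃ s ∈ Set.Icc (0:ℝ) 1,
      σ s 0 ∈ Set.Icc (0:ℝ) 1 ∧ σ s 1 ∈ Set.Icc (α+1) (α+2)) :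
    2*α - 2*ε ≤ TV σ :=
  promenade_through_B1_long_general α ε hε0 σ hbv hinit hgoal hB
end

section
/- Suppose α ≥ 2 and 0 < ε < 1/5. Then there exists a continuous path σ : [0,1] → ℝ² of bounded variation with σ(0) = X_init, σ(1) = X_goal, σ(s) ∈ X_free for all s ∈ [0,1], and TV(σ) ≤ α + 8ε. Moreover α + 8ε < 2α − 2ε, so every feasible path whose image intersects B₁ = [0,1] × [α+1, α+2] has strictly larger total variation than this path. -/
/-!
Go down `3ε` from `X_init` to height `1 - ε`, run right for `α + 2ε` just below the obstacle,
and go up `3ε` to `X_goal`. Parametrising the three legs by clamped monotone ramps writes the path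
as `X_init + Σₖ rampₖ(s) • vₖ`; since the variation of a sum is at most the sum of the variations,
its total variation is at most `Σₖ ‖vₖ‖ = α + 8ε`. The final inequality is just `10ε < 2 ≤ α`.
-/

open Set

theorem eVariationOn_add_le {α E : Type*} [LinearOrder α] [SeminormedAddCommGroup E]
    (f g : α → E) (s : Set α) :
    eVariationOn (f + g) s ≤ eVariationOn f s + eVariationOn g s := by
  refine iSup_le fun ⟨n, u, hu, us⟩ => ?_
  calc ∑ i ∈ Finset.range n, edist ((f + g) (u (i + 1))) ((f + g) (u i))
      ≤ ∑ i ∈ Finset.range n,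
          (edist (f (u (i + 1))) (f (u i)) + edist (g (u (i + 1))) (g (u i))) :=
        Finset.sum_le_sum fun i _ => edist_add_add_le _ _ _ _
    _ ≤ eVariationOn f s + eVariationOn g s := by
        rw [Finset.sum_add_distrib]
        exact add_le_add (eVariationOn.sum_le hu us) (eVariationOn.sum_le hu us)

theorem eVariationOn_const {α E : Type*} [LinearOrder α] [PseudoEMetricSpace E]
    (c : E) (s : Set α) : eVariationOn (fun _ => c) s = 0 :=
  eVariationOn.constant_on (subsingleton_singleton.anti (image_subset_iff.2 fun _ _ => rfl))

theorem eVariationOn_smul_const_le {α E : Type*} [LinearOrder α] [NormedAddCommGroup E]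
    [NormedSpace ℝ E] (φ : α → ℝ) (v : E) (s : Set α) :
    eVariationOn (fun x => φ x • v) s ≤ ‖v‖ₑ * eVariationOn φ s := by
  simpa [eVariationOn_const] using eVariationOn_fun_smul_le (f := φ) (g := fun _ => v)
    (C := ⊤) (fun _ _ => le_top) (fun _ _ => le_rfl)

/-- Progress along the `k`-th of three legs, traversed while `s ∈ [k/3, (k+1)/3]`. -/
def ramp (k s : ℝ) : ℝ := max 0 (min 1 (3 * s - k))

theorem ramp_eq_zero {k s : ℝ} (h : 3 * s ≤ k) : ramp k s = 0 :=
  max_eq_left (min_le_of_right_le (by linarith))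

theorem ramp_eq_one {k s : ℝ} (h : k + 1 ≤ 3 * s) : ramp k s = 1 := by
  rw [ramp, min_eq_left (by linarith), max_eq_right zero_le_one]

theorem ramp_mem_Icc (k s : ℝ) : ramp k s ∈ Icc (0 : ℝ) 1 :=
  ⟨le_max_left _ _, max_le zero_le_one (min_le_left _ _)⟩

@[fun_prop]
theorem continuous_ramp (k : ℝ) : Continuous (ramp k) := by
  unfold ramp; fun_prop

theorem monotone_ramp (k : ℝ) : Monotone (ramp k) := fun _ _ h => by
  unfold ramp; gcongr

theorem eVariationOn_ramp {k : ℝ} (hk0 : 0 ≤ k) (hk2 : k ≤ 2) :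
    eVariationOn (ramp k) (Icc 0 1) = 1 := by
  have := ((monotone_ramp k).monotoneOn (Icc (0 : ℝ) 1)).eVariationOn_eq
    (left_mem_Icc.2 zero_le_one) (right_mem_Icc.2 zero_le_one)
  rwa [inter_self, ramp_eq_one (by linarith), ramp_eq_zero (by linarith), sub_zero,
    ENNReal.ofReal_one] at this

section ThreeLegPath

variable {E : Type*} [NormedAddCommGroup E] [NormedSpace ℝ E] (p u v w : E)

def threeLegPath (s : ℝ) : E := p + ramp 0 s • u + ramp 1 s • v + ramp 2 s • w

theorem continuous_threeLegPath : Continuous (threeLegPath p u v w) := by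
  unfold threeLegPath; fun_prop

theorem threeLegPath_zero : threeLegPath p u v w 0 = p := by
  simp [threeLegPath, ramp_eq_zero]

theorem threeLegPath_one : threeLegPath p u v w 1 = p + u + v + w := by
  norm_num [threeLegPath, ramp_eq_one]

theorem eVariationOn_threeLegPath_le :
    eVariationOn (threeLegPath p u v w) (Icc 0 1) ≤ ‖u‖ₑ + ‖v‖ₑ + ‖w‖ₑ := by
  have hsplit : threeLegPath p u v w =
      (fun _ => p) + (fun s => ramp 0 s • u) + (fun s => ramp 1 s • v) + (fun s => ramp 2 s • w) :=
    rfl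
  grw [hsplit, eVariationOn_add_le, eVariationOn_add_le, eVariationOn_add_le, eVariationOn_const,
    eVariationOn_smul_const_le, eVariationOn_smul_const_le, eVariationOn_smul_const_le,
    eVariationOn_ramp le_rfl zero_le_two, eVariationOn_ramp zero_le_one one_le_two,
    eVariationOn_ramp zero_le_two le_rfl, zero_add, mul_one, mul_one, mul_one]

theorem boundedVariationOn_threeLegPath :
    BoundedVariationOn (threeLegPath p u v w) (Icc 0 1) :=
  ((eVariationOn_threeLegPath_le p u v w).trans_lt (by simp [ENNReal.add_lt_top])).ne

end ThreeLegPath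

theorem pt_add_pt (a b c d : ℝ) : pt a b + pt c d = pt (a + c) (b + d) := by
  ext i; fin_cases i <;> rfl

theorem smul_pt (r a b : ℝ) : r • pt a b = pt (r * a) (r * b) := by
  ext i; fin_cases i <;> rfl

@[simp]
theorem pt_apply_zero (x y : ℝ) : pt x y 0 = x := rfl

@[simp]
theorem pt_apply_one (x y : ℝ) : pt x y 1 = y := rfl

theorem norm_pt (x y : ℝ) : ‖pt x y‖ = √(x ^ 2 + y ^ 2) := by
  simp [pt, EuclideanSpace.norm_eq, Fin.sum_univ_two]

theorem norm_pt_zero_left (y : ℝ) : ‖pt 0 y‖ = |y| := by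
  rw [norm_pt, zero_pow two_ne_zero, zero_add, Real.sqrt_sq_eq_abs]

theorem norm_pt_zero_right (x : ℝ) : ‖pt x 0‖ = |x| := by
  rw [norm_pt, zero_pow two_ne_zero, add_zero, Real.sqrt_sq_eq_abs]

section Promenade

variable {α ε : ℝ}

noncomputable def promenadePath (α ε : ℝ) : ℝ → EuclideanSpace ℝ (Fin 2) :=
  threeLegPath (pt (1 - ε) (1 + 2 * ε)) (pt 0 (-(3 * ε))) (pt (α + 2 * ε) 0) (pt 0 (3 * ε))

theorem promenadePath_eq (α ε s : ℝ) : promenadePath α ε s =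
    pt (1 - ε + (α + 2 * ε) * ramp 1 s) (1 + 2 * ε - 3 * ε * ramp 0 s + 3 * ε * ramp 2 s) := by
  simp only [promenadePath, threeLegPath, smul_pt, pt_add_pt]
  congr 1 <;> ring

theorem promenadePath_zero (α ε : ℝ) : promenadePath α ε 0 = pt (1 - ε) (1 + 2 * ε) :=
  threeLegPath_zero ..

theorem promenadePath_one (α ε : ℝ) : promenadePath α ε 1 = pt (α + 1 + ε) (1 + 2 * ε) := by
  rw [promenadePath, threeLegPath_one, pt_add_pt, pt_add_pt, pt_add_pt]
  congr 1 <;> ring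

theorem promenadePath_mem_box (hα : 0 ≤ α) (hε0 : 0 ≤ ε) (hε1 : ε ≤ 1 / 5) (s : ℝ) :
    promenadePath α ε s 0 ∈ Icc 0 (α + 2) ∧ promenadePath α ε s 1 ∈ Icc 0 (α + 2) := by
  obtain ⟨h00, h01⟩ := ramp_mem_Icc 0 s
  obtain ⟨h10, h11⟩ := ramp_mem_Icc 1 s
  obtain ⟨h20, h21⟩ := ramp_mem_Icc 2 s
  simp only [promenadePath_eq, pt_apply_zero, pt_apply_one, mem_Icc]
  refine ⟨⟨?_, ?_⟩, ?_, ?_⟩ <;> nlinarith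

theorem promenadePath_not_mem_obstacle (hε : 0 < ε) (s : ℝ) :
    ¬(promenadePath α ε s 0 ∈ Icc 1 (α + 1) ∧ promenadePath α ε s 1 ∈ Icc 1 (α + 1)) := by
  simp only [promenadePath_eq, pt_apply_zero, pt_apply_one, mem_Icc]
  rintro ⟨⟨hx1, hx2⟩, hy1, -⟩
  rcases le_total (3 * s) 1 with h1 | h1
  · rw [ramp_eq_zero h1] at hx1; linarith
  rcases le_total (3 * s) 2 with h2 | h2
  · rw [ramp_eq_one (by linarith), ramp_eq_zero h2] at hy1; linarith
  · rw [ramp_eq_one (by linarith)] at hx2; linarith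

theorem TV_promenadePath_le (hα : 0 ≤ α) (hε : 0 ≤ ε) : TV (promenadePath α ε) ≤ α + 8 * ε := by
  refine ENNReal.toReal_le_of_le_ofReal (by positivity) ?_
  calc eVariationOn (promenadePath α ε) (Icc 0 1)
      ≤ ‖pt 0 (-(3 * ε))‖ₑ + ‖pt (α + 2 * ε) 0‖ₑ + ‖pt 0 (3 * ε)‖ₑ :=
        eVariationOn_threeLegPath_le ..
    _ = ENNReal.ofReal (3 * ε) + ENNReal.ofReal (α + 2 * ε) + ENNReal.ofReal (3 * ε) := by
        simp only [← ofReal_norm, norm_pt_zero_left, norm_pt_zero_right, abs_neg,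
          abs_of_nonneg (by positivity : 0 ≤ 3 * ε),
          abs_of_nonneg (by positivity : 0 ≤ α + 2 * ε)]
    _ = ENNReal.ofReal (α + 8 * ε) := by
        rw [← ENNReal.ofReal_add (by positivity) (by positivity),
          ← ENNReal.ofReal_add (by positivity) (by positivity)]
        ring_nf

end Promenade

/-- In the promenade problem (configuration space `X = [0,α+2]²`, obstacle
`X_obs = [1,α+1]²`, `X_free = X \ X_obs`, `X_init = (1−ε, 1+2ε)`,
`X_goal = (α+1+ε, 1+2ε)`, with `α ≥ 2`, `0 < ε < 1/5`), there is a feasible path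
(continuous, of bounded variation, from `X_init` to `X_goal`, staying in `X_free`)
of total variation at most `α + 8ε`; moreover `α + 8ε < 2α − 2ε`, so every feasible
path whose image meets `B₁ = [0,1] × [α+1, α+2]` has strictly larger total variation. -/
theorem promenade_short_feasible_path (α ε : ℝ) (hα : 2 ≤ α) (hε0 : 0 < ε) (hε1 : ε < 1/5) :
    (∃ σ : ℝ → EuclideanSpace ℝ (Fin 2),
      ContinuousOn σ (Set.Icc 0 1) ∧ BoundedVariationOn σ (Set.Icc 0 1) ∧
      σ 0 = pt (1 - ε) (1 + 2*ε) ∧ σ 1 = pt (α + 1 + ε) (1 + 2*ε) ∧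
      (∀ s ∈ Set.Icc (0:ℝ) 1,
        (σ s 0 ∈ Set.Icc (0:ℝ) (α+2) ∧ σ s 1 ∈ Set.Icc (0:ℝ) (α+2)) ∧
        ¬(σ s 0 ∈ Set.Icc (1:ℝ) (α+1) ∧ σ s 1 ∈ Set.Icc (1:ℝ) (α+1))) ∧
      TV σ ≤ α + 8*ε) ∧
    α + 8*ε < 2*α - 2*ε :=
  ⟨⟨promenadePath α ε, (continuous_threeLegPath ..).continuousOn,
    boundedVariationOn_threeLegPath _ _ _ _, promenadePath_zero α ε, promenadePath_one α ε,
    fun s _ => ⟨promenadePath_mem_box (by linarith) hε0.le hε1.le s,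
      promenadePath_not_mem_obstacle hε0 s⟩,
    TV_promenadePath_le (by linarith) hε0.le⟩, by linarith⟩
end

section
/- Let F ⊆ ℝ^d be a bounded connected set and let η > 0. Define the map g on subsets of ℝ^d by g(S) = { y ∈ F : ∃ s ∈ S, ‖y − s‖ < η }, and let g^(t) denote its t-fold iterate. Then for every x ∈ F there exists a natural number t such that F ⊆ g^(t)({x}). -/
/-- The visibility-type map `g(S) = { y ∈ F : ∃ s ∈ S, ‖y − s‖ < η }`. -/
def gmap {d : ℕ} (F : Set (EuclideanSpace ℝ (Fin d))) (η : ℝ)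
    (S : Set (EuclideanSpace ℝ (Fin d))) : Set (EuclideanSpace ℝ (Fin d)) :=
  {y | y ∈ F ∧ ∃ s ∈ S, ‖y - s‖ < η}

/-- For a bounded connected set `F ⊆ ℝ^d` and `η > 0`, every point of `F` reaches all
of `F` in finitely many iterates of `g`: for each `x ∈ F` there is `t` with
`F ⊆ g^(t)({x})`. -/
theorem bounded_connected_finitely_many_iterates {d : ℕ}
    (F : Set (EuclideanSpace ℝ (Fin d)))
    (hbdd : Bornology.IsBounded F) (hconn : IsConnected F)
    (η : ℝ) (hη : 0 < η) :
    ∀ x ∈ F, ∃ t : ℕ, F ⊆ (gmap F η)^[t] {x} := by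
  intro x hx
  set g := gmap F η with hg
  have hmono : Monotone g := by
    intro A B hAB y hy
    obtain ⟨hyF, s, hs, hns⟩ := hy
    exact ⟨hyF, s, hAB hs, hns⟩
  have hx1 : x ∈ g {x} := ⟨hx, x, rfl, by simp [hη]⟩
  have hchain : ∀ n, g^[n] {x} ⊆ g^[n + 1] {x} := by
    intro n
    rw [Function.iterate_succ_apply]
    exact (hmono.iterate n) (by simpa using hx1)
  have hchain' : Monotone (fun n => g^[n] {x}) := monotone_nat_of_le_succ hchain
  -- the reachable set
  set U : Set (EuclideanSpace ℝ (Fin d)) := ⋃ n, g^[n + 1] {x} with hU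
  have hgU : g U ⊆ U := by
    intro p hp
    obtain ⟨hpF, s, hs, hns⟩ := hp
    obtain ⟨_, ⟨n, rfl⟩, hsn⟩ := hs
    exact Set.mem_iUnion.2 ⟨n + 1, by
      rw [Function.iterate_succ_apply']
      exact ⟨hpF, s, hsn, hns⟩⟩
  have hxU : x ∈ U := Set.mem_iUnion.2 ⟨0, by simpa using hx1⟩
  -- open sets V, W
  set V : Set (EuclideanSpace ℝ (Fin d)) := ⋃ y ∈ U, Metric.ball y (η / 2) with hV
  set W : Set (EuclideanSpace ℝ (Fin d)) := ⋃ y ∈ F \ U, Metric.ball y (η / 2) with hW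
  have hVo : IsOpen V := isOpen_biUnion fun _ _ => Metric.isOpen_ball
  have hWo : IsOpen W := isOpen_biUnion fun _ _ => Metric.isOpen_ball
  have hdisj : Disjoint V W := by
    rw [Set.disjoint_left]
    rintro p hpV hpW
    obtain ⟨_, ⟨y, rfl⟩, _, ⟨hyU, rfl⟩, hpy⟩ := hpV
    obtain ⟨_, ⟨z, rfl⟩, _, ⟨hzFU, rfl⟩, hpz⟩ := hpW
    have hzy : ‖z - y‖ < η := by
      rw [← dist_eq_norm]
      calc dist z y ≤ dist z p + dist p y := dist_triangle _ _ _
        _ < η / 2 + η / 2 := by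
            rw [dist_comm z p]
            exact add_lt_add (Metric.mem_ball.1 hpz) (Metric.mem_ball.1 hpy)
        _ = η := by ring
    exact hzFU.2 (hgU ⟨hzFU.1, y, hyU, hzy⟩)
  have hsub : F ⊆ V ∪ W := by
    intro p hp
    by_cases hpU : p ∈ U
    · exact Or.inl (Set.mem_biUnion hpU (Metric.mem_ball_self (by linarith)))
    · exact Or.inr (Set.mem_biUnion ⟨hp, hpU⟩ (Metric.mem_ball_self (by linarith)))
  have hFV : F ⊆ V := by
    rcases hconn.isPreconnected.subset_or_subset hVo hWo hdisj hsub with h | h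
    · exact h
    · exfalso
      have hxV : x ∈ V := Set.mem_biUnion hxU (Metric.mem_ball_self (by linarith))
      exact Set.disjoint_left.1 hdisj hxV (h hx)
  have hFU : F ⊆ U := by
    intro p hp
    obtain ⟨_, ⟨y, rfl⟩, _, ⟨hyU, rfl⟩, hpy⟩ := hFV hp
    have : ‖p - y‖ < η := by
      rw [← dist_eq_norm]
      have := Metric.mem_ball.1 hpy
      linarith
    exact hgU ⟨hp, y, hyU, this⟩
  -- compactness: find a single n
  set Vn : ℕ → Set (EuclideanSpace ℝ (Fin d)) :=
    fun n => ⋃ y ∈ g^[n + 1] {x}, Metric.ball y (η / 2) with hVn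
  have hVno : ∀ n, IsOpen (Vn n) := fun n => isOpen_biUnion fun _ _ => Metric.isOpen_ball
  have hVnmono : Monotone Vn := by
    intro m n hmn p hp
    obtain ⟨_, ⟨y, rfl⟩, _, ⟨hy, rfl⟩, hpy⟩ := hp
    exact Set.mem_biUnion (hchain' (Nat.add_le_add_right hmn 1) hy) hpy
  have hcover : closure F ⊆ ⋃ n, Vn n := by
    intro z hz
    obtain ⟨y, hyF, hzy⟩ := Metric.mem_closure_iff.1 hz (η / 2) (by linarith)
    obtain ⟨n, hyn⟩ := Set.mem_iUnion.1 (hFU hyF)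
    exact Set.mem_iUnion.2 ⟨n, Set.mem_biUnion hyn (Metric.mem_ball.2 hzy)⟩
  have hcpt : IsCompact (closure F) := hbdd.isCompact_closure
  obtain ⟨s, hs⟩ := hcpt.elim_finite_subcover Vn hVno hcover
  set N : ℕ := s.sup id with hN
  have hcF : closure F ⊆ Vn N := by
    intro z hz
    obtain ⟨i, hi, hzi⟩ := Set.mem_iUnion₂.1 (hs hz)
    exact hVnmono (Finset.le_sup (f := id) hi) hzi
  refine ⟨N + 2, ?_⟩
  intro p hp
  obtain ⟨_, ⟨y, rfl⟩, _, ⟨hy, rfl⟩, hpy⟩ := hcF (subset_closure hp)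
  have hpyn : ‖p - y‖ < η := by
    rw [← dist_eq_norm]
    have := Metric.mem_ball.1 hpy
    linarith
  show p ∈ g^[N + 2] {x}
  rw [show N + 2 = (N + 1) + 1 from rfl, Function.iterate_succ_apply']
  exact ⟨hp, y, hy, hpyn⟩
end
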